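/- There exists a constant C > 0 such that for all real numbers k ∈ (0, 1) and a ≥ 1, 2k(1 − k²)^{−3/2}·(artanh(√(1 − k²)/a) − √(1 − k²)/a) ≤ C. -/

import Mathlib

/-!
For `0 ≤ t < 1` put `y = artanh t`; then `sinh y = t / √(1 - t²)`, so `y ≤ sinh y` gives
`artanh t ≤ t / √(1 - t²) ≤ t / (1 - t²)`, hence `artanh t - t ≤ t² artanh t ≤ t³ / √(1 - t²)`,
a bound increasing in `t`. With `u = √(1 - k²)` and `t = u / a ≤ u` the quantity is therefore
at most `2k u⁻³ · u³ / √(1 - u²) = 2`, since `√(1 - u²) = k`.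
-/

/-- The real inverse hyperbolic tangent, `artanh x = (1/2) · ln ((1+x)/(1−x))`. -/
noncomputable def artanh (x : ℝ) : ℝ := (1 / 2) * Real.log ((1 + x) / (1 - x))

namespace Real

variable {t : ℝ}

lemma artanh_le_div_sqrt (h0 : 0 ≤ t) (h1 : t < 1) : Real.artanh t ≤ t / √(1 - t ^ 2) := by
  rw [← sinh_artanh ⟨by linarith, h1⟩]
  exact self_le_sinh_iff.mpr (artanh_nonneg h0)

lemma artanh_le_div_one_sub_sq (h0 : 0 ≤ t) (h1 : t < 1) : Real.artanh t ≤ t / (1 - t ^ 2) := by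
  have : 0 < 1 - t ^ 2 := by nlinarith
  calc Real.artanh t ≤ t / √(1 - t ^ 2) := artanh_le_div_sqrt h0 h1
    _ ≤ t / (1 - t ^ 2) := by
      gcongr
      exact le_sqrt_self_iff.mpr (by nlinarith)

lemma artanh_sub_self_le (h0 : 0 ≤ t) (h1 : t < 1) :
    Real.artanh t - t ≤ t ^ 3 / √(1 - t ^ 2) := by
  have hpos : 0 < 1 - t ^ 2 := by nlinarith
  have hsq : Real.artanh t - t ≤ t ^ 2 * Real.artanh t := by
    have := (le_div_iff₀ hpos).mp (artanh_le_div_one_sub_sq h0 h1)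
    linarith
  calc Real.artanh t - t ≤ t ^ 2 * Real.artanh t := hsq
    _ ≤ t ^ 2 * (t / √(1 - t ^ 2)) := by gcongr; exact artanh_le_div_sqrt h0 h1
    _ = t ^ 3 / √(1 - t ^ 2) := by ring

end Real

lemma artanh_eq_real_artanh {x : ℝ} (hx : x ∈ Set.Icc (-1) 1) : artanh x = Real.artanh x :=
  (Real.artanh_eq_half_log hx).symm

/-- There is a constant `C > 0` such that for all `k ∈ (0, 1)` and `a ≥ 1`,
`2k(1 − k²)^(−3/2) · (artanh(√(1 − k²)/a) − √(1 − k²)/a) ≤ C`. -/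
theorem stmt_16 :
    ∃ C : ℝ, 0 < C ∧ ∀ k a : ℝ, 0 < k → k < 1 → 1 ≤ a →
      2 * k * (1 - k ^ 2) ^ (-(3 : ℝ) / 2) *
        (artanh (Real.sqrt (1 - k ^ 2) / a) - Real.sqrt (1 - k ^ 2) / a) ≤ C := by
  refine ⟨2, two_pos, fun k a hk hk1 ha => ?_⟩
  have h1k : 0 < 1 - k ^ 2 := by nlinarith
  set u := √(1 - k ^ 2) with hu
  have hu0 : 0 < u := Real.sqrt_pos.mpr h1k
  have hk_eq : √(1 - u ^ 2) = k := by
    rw [hu, Real.sq_sqrt h1k.le, sub_sub_cancel, Real.sqrt_sq hk.le]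
  have hu1 : u < 1 := by
    rw [hu, Real.sqrt_lt' one_pos]
    nlinarith
  have hua0 : 0 ≤ u / a := by positivity
  have hua : u / a ≤ u := div_le_self hu0.le ha
  have hpow : (1 - k ^ 2) ^ (-(3 : ℝ) / 2) = (u ^ 3)⁻¹ := by
    rw [Real.rpow_div_two_eq_sqrt _ h1k.le, Real.rpow_neg hu0.le]
    norm_cast
  have hbound : artanh (u / a) - u / a ≤ u ^ 3 / k := by
    rw [artanh_eq_real_artanh ⟨by linarith, by linarith⟩, ← hk_eq]
    calc Real.artanh (u / a) - u / a ≤ (u / a) ^ 3 / √(1 - (u / a) ^ 2) :=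
          Real.artanh_sub_self_le hua0 (hua.trans_lt hu1)
      _ ≤ u ^ 3 / √(1 - u ^ 2) := by
        have : 0 < √(1 - u ^ 2) := by rw [hk_eq]; exact hk
        gcongr
  calc 2 * k * (1 - k ^ 2) ^ (-(3 : ℝ) / 2) * (artanh (u / a) - u / a)
      ≤ 2 * k * (u ^ 3)⁻¹ * (u ^ 3 / k) := by rw [hpow]; gcongr
    _ = 2 := by field_simp
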